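/- arXiv:math/0111154 — 4 statements merged into one kernel-verified Lean document; each statement's English description precedes it below -/
import Mathlib

section
/- Let X be a topological space, k ≥ 1, and let 𝕀^k = [0,1]^k with the Euclidean metric. Suppose g, g₀ : X → 𝕀^k are continuous, α : X → (0, ∞) is continuous with d_k(g(x), g₀(x)) ≤ α(x) for all x in a closed set F ⊆ X, and η > 0. Define Φ : X → (nonempty closed convex subsets of 𝕀^k) by Φ(x) = {g(x)} for x ∈ F and Φ(x) = closed ball of center g₀(x) and radius α(x) for x ∉ F. Then Φ is lower semi-continuous. -/
/-- The cube `𝕀^k` with the Euclidean metric, as a subset of Euclidean space. -/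
def Cube (k : ℕ) : Set (EuclideanSpace ℝ (Fin k)) := {x | ∀ i, x i ∈ Set.Icc (0 : ℝ) 1}

/-- A set-valued map is lower semi-continuous if the preimage condition
`{x : Φ(x) ∩ O ≠ ∅}` is open for every open `O`. -/
def LowerSemicontinuousSV {X M : Type*} [TopologicalSpace X] [TopologicalSpace M]
    (Φ : X → Set M) : Prop :=
  ∀ O : Set M, IsOpen O → IsOpen {x | (Φ x ∩ O).Nonempty}

open Classical in
/-- The set-valued map `Φ` with `Φ(x) = {g(x)}` for `x ∈ F` and `Φ(x)` the closed ball
in `𝕀^k` of center `g₀(x)` and radius `α(x)` for `x ∉ F` is lower semi-continuous,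
provided `d_k(g(x),g₀(x)) ≤ α(x)` on the closed set `F`. -/
theorem stmt5 (k : ℕ) (hk : 1 ≤ k) {X : Type*} [TopologicalSpace X]
    (F : Set X) (hF : IsClosed F)
    (g g₀ : X → Cube k) (hg : Continuous g) (hg₀ : Continuous g₀)
    (α : X → ℝ) (hα : Continuous α) (hαpos : ∀ x, 0 < α x)
    (hle : ∀ x ∈ F, dist (g x) (g₀ x) ≤ α x)
    (η : ℝ) (hη : 0 < η) :
    LowerSemicontinuousSV
      (fun x => if x ∈ F then {g x} else Metric.closedBall (g₀ x) (α x)) := by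
  intro O hO
  rw [isOpen_iff_forall_mem_open]
  rintro x ⟨y, hyΦ, hyO⟩
  simp only [Set.mem_setOf_eq] at hyΦ
  have hyd : dist y (g₀ x) ≤ α x := by
    by_cases hxF : x ∈ F
    · rw [if_pos hxF, Set.mem_singleton_iff] at hyΦ
      rw [hyΦ]; exact hle x hxF
    · rw [if_neg hxF, Metric.mem_closedBall] at hyΦ; exact hyΦ
  obtain ⟨ε, hε, hball⟩ := Metric.isOpen_iff.1 hO y hyO
  have hD0 : (0:ℝ) ≤ dist y (g₀ x) := dist_nonneg
  obtain ⟨t, ht0, ht1, htD⟩ :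
      ∃ t : ℝ, 0 < t ∧ t ≤ 1/2 ∧ t * dist y (g₀ x) < ε := by
    refine ⟨min (ε / (2 * (dist y (g₀ x) + 1))) (1/2),
      lt_min (by positivity) (by norm_num), min_le_right _ _, ?_⟩
    have h1 : min (ε / (2 * (dist y (g₀ x) + 1))) (1/2) ≤ ε / (2 * (dist y (g₀ x) + 1)) :=
      min_le_left _ _
    have h2 : ε / (2 * (dist y (g₀ x) + 1)) * dist y (g₀ x) < ε := by
      rw [div_mul_eq_mul_div, div_lt_iff₀ (by positivity)]
      nlinarith
    calc min (ε / (2 * (dist y (g₀ x) + 1))) (1/2) * dist y (g₀ x)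
        ≤ ε / (2 * (dist y (g₀ x) + 1)) * dist y (g₀ x) := by
          exact mul_le_mul_of_nonneg_right h1 hD0
      _ < ε := h2
  set z : EuclideanSpace ℝ (Fin k) := (1 - t) • (y : EuclideanSpace ℝ (Fin k))
      + t • ((g₀ x : EuclideanSpace ℝ (Fin k))) with hzdef
  have hz : z ∈ Cube k := by
    intro i
    have h1 := (y.2 i).1
    have h2 := (y.2 i).2
    have h3 := ((g₀ x).2 i).1
    have h4 := ((g₀ x).2 i).2
    have hzi : z i = (1 - t) * (y : EuclideanSpace ℝ (Fin k)) i
        + t * (g₀ x : EuclideanSpace ℝ (Fin k)) i := rfl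
    rw [Set.mem_Icc, hzi]
    constructor <;> nlinarith
  set y' : Cube k := ⟨z, hz⟩ with hy'def
  have hsub : z - (g₀ x : EuclideanSpace ℝ (Fin k))
      = (1 - t) • ((y : EuclideanSpace ℝ (Fin k)) - (g₀ x : EuclideanSpace ℝ (Fin k))) := by
    rw [hzdef]; module
  have hsub2 : z - (y : EuclideanSpace ℝ (Fin k))
      = t • ((g₀ x : EuclideanSpace ℝ (Fin k)) - (y : EuclideanSpace ℝ (Fin k))) := by
    rw [hzdef]; module
  have hdist1 : dist y' (g₀ x) = (1 - t) * dist y (g₀ x) := by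
    rw [Subtype.dist_eq, dist_eq_norm]
    show ‖z - _‖ = _
    rw [hsub, norm_smul, Real.norm_eq_abs, abs_of_nonneg (by linarith)]
    rw [Subtype.dist_eq, dist_eq_norm]
  have hdisty : dist y' y = t * dist y (g₀ x) := by
    rw [Subtype.dist_eq, dist_eq_norm]
    show ‖z - _‖ = _
    rw [hsub2, norm_smul, Real.norm_eq_abs, abs_of_nonneg ht0.le]
    rw [Subtype.dist_eq, dist_comm, dist_eq_norm]
  have hy'O : y' ∈ O := by
    apply hball
    rw [Metric.mem_ball, hdisty]
    exact htD
  have hy'lt : dist y' (g₀ x) < α x := by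
    rw [hdist1]
    nlinarith [hαpos x]
  have hWopen : IsOpen {x' | dist y' (g₀ x') < α x'} :=
    isOpen_lt (Continuous.dist continuous_const hg₀) hα
  by_cases hxF : x ∈ F
  · refine ⟨g ⁻¹' O ∩ {x' | dist y' (g₀ x') < α x'}, ?_, (hO.preimage hg).inter hWopen, ?_, ?_⟩
    · rintro x' ⟨h1, h2⟩
      by_cases hx'F : x' ∈ F
      · exact ⟨g x', by simp [hx'F], h1⟩
      · exact ⟨y', by simp [hx'F]; exact h2.le, hy'O⟩
    · rw [if_pos hxF, Set.mem_singleton_iff] at hyΦ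
      exact Set.mem_preimage.2 (hyΦ ▸ hyO)
    · exact hy'lt
  · refine ⟨Fᶜ ∩ {x' | dist y' (g₀ x') < α x'}, ?_, hF.isOpen_compl.inter hWopen, hxF, hy'lt⟩
    rintro x' ⟨h1, h2⟩
    exact ⟨y', by simp [Set.notMem_of_mem_compl h1]; exact h2.le, hy'O⟩
end

section
/- Let X be a paracompact topological space, k ≥ 1, F ⊆ X closed, g₀ : X → 𝕀^k continuous, α : X → (0, ∞) continuous, and g : X → 𝕀^k continuous with d_k(g(x), g₀(x)) ≤ α(x) for all x ∈ F. Then there exists a continuous g₁ : X → 𝕀^k with g₁|F = g|F and d_k(g₁(x), g₀(x)) ≤ α(x) for all x ∈ X. -/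
/-!
No selection theorem is needed: the cube is convex, so one can pull `g` radially towards `g₀`
until it lies in the closed ball of radius `α` about `g₀`. The scaling factor
`α / max α ‖g - g₀‖` is continuous because `α > 0`, equals `1` wherever `g` is already within
`α` of `g₀` (in particular on `F`), and lies in `[0, 1]`, so convexity keeps the result in the cube.
-/

open Set

lemma div_max_mem_Icc {r : ℝ} (hr : 0 ≤ r) (a : ℝ) : r / max r a ∈ Icc (0 : ℝ) 1 :=
  ⟨div_nonneg hr (hr.trans (le_max_left _ _)), div_le_one_of_le₀ (le_max_left _ _)
    (hr.trans (le_max_left _ _))⟩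

section ShrinkToBall

variable {E : Type*} [NormedAddCommGroup E] [NormedSpace ℝ E]

noncomputable def shrinkToBall (r : ℝ) (v : E) : E := (r / max r ‖v‖) • v

lemma norm_shrinkToBall_le {r : ℝ} (hr : 0 < r) (v : E) : ‖shrinkToBall r v‖ ≤ r := by
  have hmax : 0 < max r ‖v‖ := lt_max_of_lt_left hr
  rw [shrinkToBall, norm_smul, Real.norm_of_nonneg (div_max_mem_Icc hr.le ‖v‖).1,
    div_mul_eq_mul_div, div_le_iff₀ hmax]
  exact mul_le_mul_of_nonneg_left (le_max_right _ _) hr.le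

lemma shrinkToBall_of_norm_le {r : ℝ} {v : E} (hr : 0 < r) (hv : ‖v‖ ≤ r) :
    shrinkToBall r v = v := by
  rw [shrinkToBall, max_eq_left hv, div_self hr.ne', one_smul]

lemma Continuous.shrinkToBall {X : Type*} [TopologicalSpace X] {r : X → ℝ} {v : X → E}
    (hr : Continuous r) (hrpos : ∀ x, 0 < r x) (hv : Continuous v) :
    Continuous fun x => shrinkToBall (r x) (v x) :=
  (hr.div (hr.max hv.norm) fun x => (lt_max_of_lt_left (hrpos x)).ne').smul hv

end ShrinkToBall

theorem Convex.exists_continuous_eqOn_dist_le {E : Type*} [NormedAddCommGroup E]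
    [NormedSpace ℝ E] {s : Set E} (hs : Convex ℝ s) {X : Type*} [TopologicalSpace X]
    (F : Set X) (g g₀ : X → s) (hg : Continuous g) (hg₀ : Continuous g₀)
    (α : X → ℝ) (hα : Continuous α) (hαpos : ∀ x, 0 < α x)
    (hle : ∀ x ∈ F, dist (g x) (g₀ x) ≤ α x) :
    ∃ g₁ : X → s, Continuous g₁ ∧ (∀ x ∈ F, g₁ x = g x) ∧
      ∀ x, dist (g₁ x) (g₀ x) ≤ α x := by
  let v : X → E := fun x => (g x : E) - g₀ x
  have hv : Continuous v := hg.subtype_val.sub hg₀.subtype_val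
  have hmem : ∀ x, (g₀ x : E) + shrinkToBall (α x) (v x) ∈ s := fun x =>
    hs.add_smul_sub_mem (g₀ x).2 (g x).2 (div_max_mem_Icc (hαpos x).le ‖v x‖)
  refine ⟨fun x => ⟨_, hmem x⟩, ?_, fun x hx => ?_, fun x => ?_⟩
  · exact (hg₀.subtype_val.add (hα.shrinkToBall hαpos hv)).subtype_mk _
  · have hvx : ‖v x‖ ≤ α x := by simpa [Subtype.dist_eq, dist_eq_norm] using hle x hx
    ext1
    simp only [shrinkToBall_of_norm_le (hαpos x) hvx, v, add_sub_cancel]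
  · rw [Subtype.dist_eq, dist_eq_norm, add_sub_cancel_left]
    exact norm_shrinkToBall_le (hαpos x) (v x)

lemma convex_cube (k : ℕ) : Convex ℝ (Cube k) := fun _ hx _ hy _ _ ha hb hab i =>
  convex_Icc (0 : ℝ) 1 (hx i) (hy i) ha hb hab

theorem stmt6_general (k : ℕ) {X : Type*} [TopologicalSpace X]
    (F : Set X)
    (g g₀ : X → Cube k) (hg : Continuous g) (hg₀ : Continuous g₀)
    (α : X → ℝ) (hα : Continuous α) (hαpos : ∀ x, 0 < α x)
    (hle : ∀ x ∈ F, dist (g x) (g₀ x) ≤ α x) :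
    ∃ g₁ : X → Cube k, Continuous g₁ ∧ (∀ x ∈ F, g₁ x = g x) ∧
      ∀ x, dist (g₁ x) (g₀ x) ≤ α x :=
  (convex_cube k).exists_continuous_eqOn_dist_le F g g₀ hg hg₀ α hα hαpos hle

/-- If `X` is paracompact (Hausdorff), `F ⊆ X` closed, `g₀, g : X → 𝕀^k` continuous,
`α : X → (0,∞)` continuous with `d_k(g(x),g₀(x)) ≤ α(x)` on `F`, then there is a
continuous `g₁ : X → 𝕀^k` with `g₁|F = g|F` and `d_k(g₁(x),g₀(x)) ≤ α(x)` everywhere. -/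
theorem stmt6 (k : ℕ) (hk : 1 ≤ k) {X : Type*} [TopologicalSpace X] [T2Space X]
    [ParacompactSpace X]
    (F : Set X) (hF : IsClosed F)
    (g g₀ : X → Cube k) (hg : Continuous g) (hg₀ : Continuous g₀)
    (α : X → ℝ) (hα : Continuous α) (hαpos : ∀ x, 0 < α x)
    (hle : ∀ x ∈ F, dist (g x) (g₀ x) ≤ α x) :
    ∃ g₁ : X → Cube k, Continuous g₁ ∧ (∀ x ∈ F, g₁ x = g x) ∧
      ∀ x, dist (g₁ x) (g₀ x) ≤ α x :=
  stmt6_general k F g g₀ hg hg₀ α hα hαpos hle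
end

section
/- Let X be a metrizable space and f : X → Y a closed continuous surjection onto a metrizable space Y. Then for every y ∈ Y the topological boundary Fr f⁻¹(y) of the fiber f⁻¹(y) in X is compact (Vainstein's lemma). -/
/-!
Given a sequence `xₙ` in `Fr f⁻¹(y)`, push each `xₙ` slightly off the fiber, to a point `zₙ`
with `f zₙ ≠ y`, `d(zₙ, xₙ) → 0` and `f zₙ → y`. If `zₙ` had no convergent subsequence, its range
would be closed, hence so would be its image under the closed map `f`; that image would then
contain its limit `y`, which is absurd. A limit of a subsequence of `zₙ` is also one of `xₙ`,
so `Fr f⁻¹(y)` is sequentially compact.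
-/

open Filter Topology Set

theorem IsClosedMap.exists_tendsto_subseq_of_tendsto_of_ne {X Y : Type*} [TopologicalSpace X]
    [SequentialSpace X] [T1Space X] [TopologicalSpace Y] {f : X → Y} (hclosed : IsClosedMap f)
    {z : ℕ → X} {y : Y} (hz : ∀ n, f (z n) ≠ y) (hlim : Tendsto (f ∘ z) atTop (𝓝 y)) :
    ∃ (a : X) (φ : ℕ → ℕ), StrictMono φ ∧ Tendsto (z ∘ φ) atTop (𝓝 a) := by
  by_contra! hno
  have himage : IsClosed (f '' range z) := hclosed _ (isClosed_range_of_not_tendsto hno)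
  obtain ⟨_, ⟨n, rfl⟩, hn⟩ :=
    himage.mem_of_tendsto hlim (.of_forall fun n => mem_image_of_mem f (mem_range_self n))
  exact hz n hn

theorem exists_dist_lt_of_mem_closure_compl_fiber {X Y : Type*} [PseudoMetricSpace X]
    [PseudoMetricSpace Y] {f : X → Y} {x : X} (hf : ContinuousAt f x)
    (hx : x ∈ closure (f ⁻¹' {f x})ᶜ) {ε : ℝ} (hε : 0 < ε) :
    ∃ z, f z ≠ f x ∧ dist z x < ε ∧ dist (f z) (f x) < ε := by
  have := mem_closure_iff_nhdsWithin_neBot.1 hx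
  have hnear : ∀ᶠ z in 𝓝[(f ⁻¹' {f x})ᶜ] x,
      f z ≠ f x ∧ dist z x < ε ∧ dist (f z) (f x) < ε :=
    Eventually.and self_mem_nhdsWithin <| nhdsWithin_le_nhds <|
      Eventually.and (Metric.ball_mem_nhds x hε) (hf.eventually (Metric.ball_mem_nhds _ hε))
  exact hnear.exists

theorem stmt11_general {X Y : Type*} [TopologicalSpace X] [TopologicalSpace.MetrizableSpace X]
    [TopologicalSpace Y] [TopologicalSpace.MetrizableSpace Y]
    (f : X → Y) (hf : Continuous f) (hclosed : IsClosedMap f) :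
    ∀ y : Y, IsCompact (frontier (f ⁻¹' {y})) := by
  let : MetricSpace X := TopologicalSpace.metrizableSpaceMetric X
  let : MetricSpace Y := TopologicalSpace.metrizableSpaceMetric Y
  intro y
  have hfiber : IsClosed (f ⁻¹' {y}) := isClosed_singleton.preimage hf
  refine IsSeqCompact.isCompact fun x hx => ?_
  have hxy n : f (x n) = y := hfiber.frontier_subset (hx n)
  have hnear n : ∃ z, f z ≠ y ∧ dist z (x n) < 1 / (n + 1) ∧ dist (f z) y < 1 / (n + 1) := by
    have hxn : x n ∈ closure (f ⁻¹' {f (x n)})ᶜ :=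
      hxy n ▸ frontier_subset_closure (frontier_compl (f ⁻¹' {y}) ▸ hx n)
    simpa only [hxy n] using
      exists_dist_lt_of_mem_closure_compl_fiber hf.continuousAt hxn Nat.one_div_pos_of_nat
  choose z hzy hzx hfz using hnear
  have hlim : Tendsto (f ∘ z) atTop (𝓝 y) := tendsto_iff_dist_tendsto_zero.2 <|
    squeeze_zero (fun _ => dist_nonneg) (fun n => (hfz n).le)
      tendsto_one_div_add_atTop_nhds_zero_nat
  have hdist : Tendsto (fun n => dist (z n) (x n)) atTop (𝓝 0) :=
    squeeze_zero (fun _ => dist_nonneg) (fun n => (hzx n).le)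
      tendsto_one_div_add_atTop_nhds_zero_nat
  obtain ⟨a, φ, hφ, hza⟩ :=
    IsClosedMap.exists_tendsto_subseq_of_tendsto_of_ne hclosed hzy hlim
  have hxa : Tendsto (x ∘ φ) atTop (𝓝 a) := hza.congr_dist (hdist.comp hφ.tendsto_atTop)
  exact ⟨a, isClosed_frontier.mem_of_tendsto hxa (.of_forall fun n => hx (φ n)), φ, hφ, hxa⟩

/-- Vainstein's lemma: for a closed continuous surjection `f : X → Y` of metrizable
spaces, the boundary `Fr f⁻¹(y)` of every fiber is compact. -/
theorem stmt11 {X Y : Type*} [TopologicalSpace X] [TopologicalSpace.MetrizableSpace X]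
    [TopologicalSpace Y] [TopologicalSpace.MetrizableSpace Y]
    (f : X → Y) (hf : Continuous f) (hclosed : IsClosedMap f)
    (hsurj : Function.Surjective f) :
    ∀ y : Y, IsCompact (frontier (f ⁻¹' {y})) :=
  stmt11_general f hf hclosed
end

section
/- If f : X → Y is a closed surjection of metrizable spaces with dim f⁻¹(y) ≤ 0 for all y ∈ Y, then dim X ≤ dim Y. -/
open EMetric ENNReal Set

/-- Covering dimension at most `n` (`n = -1` corresponds to the empty space): every
finite open cover admits a finite open refinement of order at most `n + 1`. -/
def CovDimLE (X : Type*) [TopologicalSpace X] (n : ℤ) : Prop :=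
  ∀ U : Set (Set X), U.Finite → (∀ u ∈ U, IsOpen u) → ⋃₀ U = Set.univ →
    ∃ V : Set (Set X), V.Finite ∧ (∀ v ∈ V, IsOpen v) ∧ ⋃₀ V = Set.univ ∧
      (∀ v ∈ V, ∃ u ∈ U, v ⊆ u) ∧ ∀ x : X, {v ∈ V | x ∈ v}.ncard ≤ (n + 1).toNat

/-- Indexed shrinking version of `CovDimLE`. -/
lemma covdim_indexed {X : Type*} [TopologicalSpace X] {n : ℤ} (h : CovDimLE X n)
    {ι : Type*} [Finite ι] [Nonempty ι] (u : ι → Set X) (hop : ∀ i, IsOpen (u i))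
    (hcov : (⋃ i, u i) = Set.univ) :
    ∃ c : ι → Set X, (∀ i, IsOpen (c i)) ∧ (∀ i, c i ⊆ u i) ∧ (⋃ i, c i) = Set.univ ∧
      ∀ x, {i | x ∈ c i}.ncard ≤ (n + 1).toNat := by
  classical
  obtain ⟨V, hVfin, hVop, hVcov, hVref, hVord⟩ :=
    h (Set.range u) (Set.finite_range u) (by rintro _ ⟨i, rfl⟩; exact hop i)
      (by rw [Set.sUnion_range]; exact hcov)
  have hass : ∀ v ∈ V, ∃ i, v ⊆ u i := by
    intro v hv
    obtain ⟨w, ⟨i, rfl⟩, hsub⟩ := hVref v hv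
    exact ⟨i, hsub⟩
  choose! σ hσ using hass
  refine ⟨fun i => ⋃₀ {v | v ∈ V ∧ σ v = i}, ?_, ?_, ?_, ?_⟩
  · intro i
    exact isOpen_sUnion (fun v hv => hVop v hv.1)
  · rintro i x ⟨v, ⟨hvV, rfl⟩, hxv⟩
    exact hσ v hvV hxv
  · apply Set.eq_univ_of_univ_subset
    rw [← hVcov]
    rintro x ⟨v, hvV, hxv⟩
    exact Set.mem_iUnion.2 ⟨σ v, v, ⟨hvV, rfl⟩, hxv⟩
  · intro x
    have h2 : ∀ i ∈ {i | x ∈ (⋃₀ {v | v ∈ V ∧ σ v = i})}, ∃ v, v ∈ V ∧ σ v = i ∧ x ∈ v := by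
      rintro i ⟨v, ⟨hvV, rfl⟩, hxv⟩
      exact ⟨v, hvV, rfl, hxv⟩
    choose! g hg using h2
    refine le_trans (Set.ncard_le_ncard_of_injOn g ?_ ?_ (hVfin.subset (Set.sep_subset _ _))) (hVord x)
    · intro i hi
      exact ⟨(hg i hi).1, (hg i hi).2.2⟩
    · intro i hi j hj hij
      rw [← (hg i hi).2.1, ← (hg j hj).2.1, hij]

/-- Countable-cover refinement lemma (Dowker-type). -/
lemma covdim_countable {X : Type*} [MetricSpace X] {n : ℤ} (h : CovDimLE X n)
    (E : ℕ → Set X) (hEop : ∀ j, IsOpen (E j)) (hEcov : (⋃ j, E j) = Set.univ) :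
    ∃ A : ℕ → Set X, (∀ j, IsOpen (A j)) ∧ (∀ j, A j ⊆ E j) ∧ (⋃ j, A j) = Set.univ ∧
      ∀ x, {j | x ∈ A j}.Finite ∧ {j | x ∈ A j}.ncard ≤ (n + 1).toNat := by
  classical
  set k := (n + 1).toNat with hk
  -- exhaustion
  set U : ℕ → Set X := fun m => ⋃ j < m, E j with hU
  set P : ℕ → Set X := fun m => {x | ((m : ℝ≥0∞) + 1)⁻¹ ≤ infEdist x (U m)ᶜ} with hP
  set O : ℕ → Set X := fun m => {x | ((m : ℝ≥0∞) + 1)⁻¹ < infEdist x (U m)ᶜ} with hO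
  have hUop : ∀ m, IsOpen (U m) := fun m => isOpen_biUnion (fun j _ => hEop j)
  have hOop : ∀ m, IsOpen (O m) := fun m => isOpen_lt continuous_const continuous_infEdist
  have hPcl : ∀ m, IsClosed (P m) := fun m => isClosed_le continuous_const continuous_infEdist
  have hOP : ∀ m, O m ⊆ P m := by
    intro m x hx
    simp only [hO, Set.mem_setOf_eq] at hx
    simp only [hP, Set.mem_setOf_eq]
    exact le_of_lt hx
  have hUmono : ∀ m m', m ≤ m' → U m ⊆ U m' := by
    intro m m' hmm
    exact Set.biUnion_subset_biUnion_left (fun j hj => lt_of_lt_of_le hj hmm)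
  have hPO : ∀ m, P m ⊆ O (m + 1) := by
    intro m x hx
    have h1 : infEdist x (U m)ᶜ ≤ infEdist x (U (m+1))ᶜ :=
      infEdist_anti (Set.compl_subset_compl.2 (hUmono m (m+1) (Nat.le_succ m)))
    have h2 : ((m:ℝ≥0∞) + 1 + 1)⁻¹ < ((m:ℝ≥0∞) + 1)⁻¹ := by
      apply ENNReal.inv_lt_inv'
      have : (m:ℝ≥0∞) + 1 ≠ ⊤ := by simp
      exact lt_of_lt_of_le (ENNReal.lt_add_right this one_ne_zero) le_rfl
    calc (((m+1 : ℕ):ℝ≥0∞) + 1)⁻¹ < ((m:ℝ≥0∞)+1)⁻¹ := by push_cast; exact h2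
      _ ≤ infEdist x (U m)ᶜ := hx
      _ ≤ _ := h1
  have hOmono : ∀ m m', m ≤ m' → O m ⊆ O m' := by
    intro m m' hmm
    induction m' with
    | zero => simp_all [Nat.le_zero.1 hmm]
    | succ m'' ih =>
      rcases Nat.lt_or_ge m (m'' + 1) with hlt | hge
      · exact fun x hx => hPO m'' (hOP m'' (ih (Nat.lt_succ_iff.1 hlt) hx))
      · have : m = m'' + 1 := le_antisymm hmm hge
        subst this; exact fun x hx => hx
  have hPU : ∀ m, P m ⊆ U m := by
    intro m x hx
    have hpos : 0 < infEdist x (U m)ᶜ :=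
      lt_of_lt_of_le (ENNReal.inv_pos.2 (by simp)) hx
    have := infEdist_pos_iff_notMem_closure.1 hpos
    rw [(hUop m).isClosed_compl.closure_eq] at this
    simpa using this
  have hOcov : (⋃ m, O m) = Set.univ := by
    apply Set.eq_univ_of_forall
    intro x
    have : x ∈ ⋃ j, E j := hEcov ▸ Set.mem_univ x
    obtain ⟨j, hj⟩ := Set.mem_iUnion.1 this
    have hxU : x ∈ U (j + 1) := Set.mem_biUnion (Nat.lt_succ_self j) hj
    have hpos : 0 < infEdist x (U (j+1))ᶜ := by
      refine infEdist_pos_iff_notMem_closure.2 ?_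
      rw [(hUop (j+1)).isClosed_compl.closure_eq]
      simpa using hxU
    obtain ⟨nn, hnn⟩ := ENNReal.exists_inv_nat_lt (ne_of_gt hpos)
    set m := max nn (j + 1) with hm
    refine Set.mem_iUnion.2 ⟨m, ?_⟩
    have h1 : ((m:ℝ≥0∞) + 1)⁻¹ ≤ ((nn:ℝ≥0∞))⁻¹ := by
      apply ENNReal.inv_le_inv'
      calc (nn:ℝ≥0∞) ≤ (m:ℝ≥0∞) := by exact_mod_cast le_max_left _ _
        _ ≤ (m:ℝ≥0∞) + 1 := le_self_add
    calc ((m:ℝ≥0∞) + 1)⁻¹ ≤ ((nn:ℝ≥0∞))⁻¹ := h1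
      _ < infEdist x (U (j+1))ᶜ := hnn
      _ ≤ infEdist x (U m)ᶜ :=
          infEdist_anti (Set.compl_subset_compl.2 (hUmono (j+1) m (le_max_right _ _)))
  -- invariant
  set Inv : ℕ → (ℕ → Set X) → Prop := fun m g =>
    (∀ j, IsOpen (g j)) ∧ (∀ j, g j ⊆ E j) ∧ (∀ j, m ≤ j → g j = ∅) ∧
    (P m ⊆ ⋃ j, g j) ∧ (∀ x, {j | x ∈ g j}.ncard ≤ k) with hInv
  have base : Inv 0 (fun _ => ∅) := by
    refine ⟨fun _ => isOpen_empty, fun _ => Set.empty_subset _, fun _ _ => rfl, ?_, ?_⟩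
    · intro x hx
      exfalso
      have h0 : (U 0)ᶜ = Set.univ := by
        simp [hU]
      rw [hP] at hx
      simp only [Set.mem_setOf_eq, h0] at hx
      have : infEdist x Set.univ = 0 := infEdist_zero_of_mem (Set.mem_univ x)
      rw [this] at hx
      simp at hx
    · intro x; simp
  have step : ∀ m (g : ℕ → Set X), Inv m g → ∃ g' : ℕ → Set X, Inv (m+1) g' ∧
      ∀ j, g' j ∩ O m = g j ∩ O m := by
    intro m g hg
    obtain ⟨hgop, hgE, hgz, hgcov, hgord⟩ := hg
    -- the finite cover
    set ι : Type := Fin m ⊕ Fin (m+1) ⊕ Unit with hι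
    set u : ι → Set X := fun i => match i with
      | Sum.inl j => g j
      | Sum.inr (Sum.inl j) => E j ∩ (P m)ᶜ
      | Sum.inr (Sum.inr _) => (P (m+1))ᶜ with hu
    have huop : ∀ i, IsOpen (u i) := by
      rintro (j | j | _)
      · exact hgop j
      · exact (hEop j).inter (hPcl m).isOpen_compl
      · exact (hPcl (m+1)).isOpen_compl
    have hucov : (⋃ i, u i) = Set.univ := by
      apply Set.eq_univ_of_forall
      intro x
      by_cases hx1 : x ∈ P m
      · obtain ⟨j, hj⟩ := Set.mem_iUnion.1 (hgcov hx1)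
        have hjm : j < m := by
          by_contra hc
          rw [hgz j (Nat.le_of_not_lt hc)] at hj
          exact hj
        exact Set.mem_iUnion.2 ⟨Sum.inl ⟨j, hjm⟩, hj⟩
      · by_cases hx2 : x ∈ P (m+1)
        · have : x ∈ U (m+1) := hPU (m+1) hx2
          obtain ⟨j, hj, hxj⟩ := Set.mem_iUnion₂.1 this
          exact Set.mem_iUnion.2 ⟨Sum.inr (Sum.inl ⟨j, hj⟩), hxj, hx1⟩
        · exact Set.mem_iUnion.2 ⟨Sum.inr (Sum.inr ()), hx2⟩
    obtain ⟨c, hcop, hcu, hccov, hcord⟩ := covdim_indexed h u huop hucov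
    set g' : ℕ → Set X := fun j =>
      (g j ∩ O m) ∪ (⋃ hj : j < m, c (Sum.inl ⟨j, hj⟩)) ∪
        (⋃ hj : j < m + 1, c (Sum.inr (Sum.inl ⟨j, hj⟩))) with hg'
    have hstab : ∀ j, g' j ∩ O m = g j ∩ O m := by
      intro j
      apply Set.Subset.antisymm
      · rintro x ⟨hx, hxO⟩
        rcases hx with (⟨hx, _⟩ | hx) | hx
        · exact ⟨hx, hxO⟩
        · obtain ⟨hj, hx⟩ := Set.mem_iUnion.1 hx
          exact ⟨hcu _ hx, hxO⟩
        · obtain ⟨hj, hx⟩ := Set.mem_iUnion.1 hx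
          exact absurd (hOP m hxO) (hcu _ hx).2
      · rintro x ⟨hx, hxO⟩
        exact ⟨Or.inl (Or.inl ⟨hx, hxO⟩), hxO⟩
    refine ⟨g', ⟨?_, ?_, ?_, ?_, ?_⟩, hstab⟩
    · intro j
      refine IsOpen.union (IsOpen.union ((hgop j).inter (hOop m)) ?_) ?_ <;>
        exact isOpen_iUnion (fun _ => hcop _)
    · intro j x hx
      rcases hx with (⟨hx, _⟩ | hx) | hx
      · exact hgE j hx
      · obtain ⟨hj, hx⟩ := Set.mem_iUnion.1 hx
        exact hgE j (hcu _ hx)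
      · obtain ⟨hj, hx⟩ := Set.mem_iUnion.1 hx
        exact (hcu _ hx).1
    · intro j hj
      have h1 : g j = ∅ := hgz j (le_trans (Nat.le_succ m) hj)
      rw [hg']
      simp only [h1, Set.empty_inter]
      have h2 : ¬ j < m := by omega
      have h3 : ¬ j < m + 1 := by omega
      simp [h2, h3]
    · intro x hx
      have : x ∈ ⋃ i, c i := hccov ▸ Set.mem_univ x
      obtain ⟨i, hi⟩ := Set.mem_iUnion.1 this
      match i with
      | Sum.inl j =>
        refine Set.mem_iUnion.2 ⟨j, Or.inl (Or.inr ?_)⟩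
        exact Set.mem_iUnion.2 ⟨j.2, by simpa using hi⟩
      | Sum.inr (Sum.inl j) =>
        refine Set.mem_iUnion.2 ⟨j, Or.inr ?_⟩
        exact Set.mem_iUnion.2 ⟨j.2, by simpa using hi⟩
      | Sum.inr (Sum.inr _) =>
        exact absurd hx (hcu _ hi)
    · intro x
      by_cases hxO : x ∈ O m
      · refine le_trans (Set.ncard_le_ncard ?_ ?_) (hgord x)
        · intro j hj
          rcases hj with (⟨hx, _⟩ | hx) | hx
          · exact hx
          · obtain ⟨hj, hx⟩ := Set.mem_iUnion.1 hx
            exact hcu _ hx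
          · obtain ⟨hj, hx⟩ := Set.mem_iUnion.1 hx
            exact absurd (hOP m hxO) (hcu _ hx).2
        · apply Set.Finite.subset (Set.finite_Iio m)
          intro j hj
          by_contra hc
          have hx : x ∈ g j := hj
          rw [hgz j (by simpa using hc)] at hx
          exact hx
      · have hmem : ∀ j ∈ {j | x ∈ g' j}, ∃ i, x ∈ c i ∧
            (match i with
              | Sum.inl jj => (jj : ℕ)
              | Sum.inr (Sum.inl jj) => (jj : ℕ)
              | Sum.inr (Sum.inr _) => 0) = j ∧ (match i with
              | Sum.inr (Sum.inr _) => False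
              | _ => True) := by
          intro j hj
          rcases hj with (⟨_, hx⟩ | hx) | hx
          · exact absurd hx hxO
          · obtain ⟨hjm, hx⟩ := Set.mem_iUnion.1 hx
            exact ⟨Sum.inl ⟨j, hjm⟩, hx, rfl, trivial⟩
          · obtain ⟨hjm, hx⟩ := Set.mem_iUnion.1 hx
            exact ⟨Sum.inr (Sum.inl ⟨j, hjm⟩), hx, rfl, trivial⟩
        choose! ff hff using hmem
        refine le_trans (Set.ncard_le_ncard_of_injOn ff ?_ ?_ (Set.toFinite _)) (hcord x)
        · intro j hj
          exact (hff j hj).1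
        · intro j1 hj1 j2 hj2 heq
          rw [← (hff j1 hj1).2.1, ← (hff j2 hj2).2.1, heq]
  -- recursion
  set next : ℕ → (ℕ → Set X) → (ℕ → Set X) := fun m g =>
    if hg : Inv m g then Classical.choose (step m g hg) else g with hnext
  set F : ℕ → (ℕ → Set X) := fun m => Nat.rec (fun _ => ∅) (fun m g => next m g) m with hF
  have hFsucc : ∀ m, F (m+1) = next m (F m) := fun m => rfl
  have hFInv : ∀ m, Inv m (F m) := by
    intro m
    induction m with
    | zero => exact base
    | succ m ih =>
      have e : next m (F m) = Classical.choose (step m (F m) ih) := by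
        rw [hnext]; exact dif_pos ih
      rw [hFsucc, e]
      exact (Classical.choose_spec (step m (F m) ih)).1
  have hFstab : ∀ m j, F (m+1) j ∩ O m = F m j ∩ O m := by
    intro m j
    have hi := hFInv m
    have e : next m (F m) = Classical.choose (step m (F m) hi) := by
      rw [hnext]; exact dif_pos hi
    rw [hFsucc, e]
    exact (Classical.choose_spec (step m (F m) hi)).2 j
  have hFstab' : ∀ m m', m ≤ m' → ∀ j, F m' j ∩ O m = F m j ∩ O m := by
    intro m m' hmm
    induction m' with
    | zero =>
      have : m = 0 := Nat.le_zero.1 hmm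
      subst this; intro j; rfl
    | succ m'' ih =>
      rcases Nat.lt_or_ge m (m'' + 1) with hlt | hge
      · intro j
        have h1 : F (m''+1) j ∩ O m'' = F m'' j ∩ O m'' := hFstab m'' j
        have h2 : O m ⊆ O m'' := hOmono m m'' (Nat.lt_succ_iff.1 hlt)
        calc F (m''+1) j ∩ O m = F (m''+1) j ∩ O m'' ∩ O m := by
              rw [Set.inter_assoc, Set.inter_eq_right.2 h2]
          _ = F m'' j ∩ O m'' ∩ O m := by rw [h1]
          _ = F m'' j ∩ O m := by
              rw [Set.inter_assoc, Set.inter_eq_right.2 h2]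
          _ = F m j ∩ O m := ih (Nat.lt_succ_iff.1 hlt) j
      · have : m = m'' + 1 := le_antisymm hmm hge
        subst this; intro j; rfl
  set A : ℕ → Set X := fun j => ⋃ m, (F m j ∩ O m) with hA
  have hmemA : ∀ x j m, x ∈ O m → (x ∈ A j ↔ x ∈ F m j) := by
    intro x j m hxO
    constructor
    · intro hx
      obtain ⟨m', hm'⟩ := Set.mem_iUnion.1 hx
      set M := max m m' with hM
      have h1 : x ∈ F M j := by
        have := hFstab' m' M (le_max_right _ _) j
        rw [← this] at hm'
        exact hm'.1
      have := hFstab' m M (le_max_left _ _) j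
      have h2 : x ∈ F M j ∩ O m := ⟨h1, hxO⟩
      rw [this] at h2
      exact h2.1
    · intro hx
      exact Set.mem_iUnion.2 ⟨m, hx, hxO⟩
  refine ⟨A, ?_, ?_, ?_, ?_⟩
  · intro j
    exact isOpen_iUnion (fun m => ((hFInv m).1 j).inter (hOop m))
  · intro j x hx
    obtain ⟨m, hm⟩ := Set.mem_iUnion.1 hx
    exact (hFInv m).2.1 j hm.1
  · apply Set.eq_univ_of_forall
    intro x
    have : x ∈ ⋃ m, O m := hOcov ▸ Set.mem_univ x
    obtain ⟨m, hm⟩ := Set.mem_iUnion.1 this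
    have : x ∈ ⋃ j, F m j := (hFInv m).2.2.2.1 (hOP m hm)
    obtain ⟨j, hj⟩ := Set.mem_iUnion.1 this
    exact Set.mem_iUnion.2 ⟨j, Set.mem_iUnion.2 ⟨m, hj, hm⟩⟩
  · intro x
    have : x ∈ ⋃ m, O m := hOcov ▸ Set.mem_univ x
    obtain ⟨m, hm⟩ := Set.mem_iUnion.1 this
    have hset : {j | x ∈ A j} = {j | x ∈ F m j} := by
      ext j
      exact hmemA x j m hm
    have hfin : {j | x ∈ F m j}.Finite := by
      apply Set.Finite.subset (Set.finite_Iio m)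
      intro j hj
      by_contra hc
      have hx : x ∈ F m j := hj
      rw [(hFInv m).2.2.1 j (by simpa using hc)] at hx
      exact hx
    rw [hset]
    exact ⟨hfin, (hFInv m).2.2.2.2 x⟩

/-- σ-disjoint open refinement of an arbitrary open cover of a metric space. -/
lemma sigma_disjoint_refinement {Y : Type*} [MetricSpace Y] {ι : Type*} (W : ι → Set Y)
    (hop : ∀ s, IsOpen (W s)) (hcov : (⋃ s, W s) = Set.univ) :
    ∃ D : ℕ → ι → Set Y, (∀ m s, IsOpen (D m s)) ∧ (∀ m s, D m s ⊆ W s) ∧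
      (∀ m s t, s ≠ t → D m s ∩ D m t = ∅) ∧ (⋃ m, ⋃ s, D m s) = Set.univ := by
  classical
  set r : ι → ι → Prop := WellOrderingRel with hr
  have hwo : IsWellOrder ι r := WellOrderingRel.isWellOrder
  have wf : WellFounded r := hwo.toIsWellFounded.wf
  have hne : ∀ y : Y, {s | y ∈ W s}.Nonempty := by
    intro y
    have : y ∈ ⋃ s, W s := hcov ▸ Set.mem_univ y
    obtain ⟨s, hs⟩ := Set.mem_iUnion.1 this
    exact ⟨s, hs⟩
  set minIdx : Y → ι := fun y => wf.min {s | y ∈ W s} (hne y) with hmin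
  have hminW : ∀ y, y ∈ W (minIdx y) := fun y => wf.min_mem _ (hne y)
  have hminlt : ∀ y s, y ∈ W s → ¬ r s (minIdx y) := fun y s hs => wf.not_lt_min _ hs
  set δ : ℕ → ℝ := fun m => (1/2 : ℝ)^m with hδ
  have hδpos : ∀ m, 0 < δ m := fun m => by positivity
  set Cent : ℕ → ι → Set Y := fun m s => {x | minIdx x = s ∧ Metric.ball x (2 * δ m) ⊆ W s}
    with hCent
  set D : ℕ → ι → Set Y := fun m s => ⋃ x ∈ Cent m s, Metric.ball x (δ m / 2) with hD
  refine ⟨D, ?_, ?_, ?_, ?_⟩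
  · intro m s
    exact isOpen_biUnion (fun x _ => Metric.isOpen_ball)
  · rintro m s y hy
    obtain ⟨x, hx, hyx⟩ := Set.mem_iUnion₂.1 hy
    apply hx.2
    apply Metric.ball_subset_ball (by linarith [hδpos m]) hyx
  · intro m s t hst
    ext y
    simp only [Set.mem_inter_iff, Set.mem_empty_iff_false, iff_false]
    rintro ⟨hy1, hy2⟩
    obtain ⟨x, hx, hyx⟩ := Set.mem_iUnion₂.1 hy1
    obtain ⟨x', hx', hyx'⟩ := Set.mem_iUnion₂.1 hy2
    have hxx' : dist x x' < δ m := by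
      have h1 := Metric.mem_ball.1 hyx
      have h2 := Metric.mem_ball.1 hyx'
      calc dist x x' ≤ dist x y + dist y x' := dist_triangle _ _ _
        _ = dist y x + dist y x' := by rw [dist_comm x y]
        _ < δ m / 2 + δ m / 2 := by linarith
        _ = δ m := by ring
    have key : ∀ a b : Y, ∀ sa sb, sa ≠ sb → a ∈ Cent m sa → b ∈ Cent m sb →
        dist a b < δ m → r sa sb → False := by
      intro a b sa sb hab ha hb hdab hrab
      have hbW : b ∉ W sa := by
        intro hmem
        exact hminlt b sa hmem (hb.1 ▸ hrab)
      apply hbW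
      apply ha.2
      apply Metric.mem_ball'.2
      show dist a b < 2 * δ m
      calc dist a b < δ m := hdab
        _ < 2 * δ m := by linarith [hδpos m]
    rcases trichotomous_of r s t with hlt | heq | hgt
    · exact key x x' s t hst hx hx' hxx' hlt
    · exact hst heq
    · exact key x' x t s (Ne.symm hst) hx' hx (by rw [dist_comm]; exact hxx') hgt
  · apply Set.eq_univ_of_forall
    intro y
    set s := minIdx y with hs
    obtain ⟨ε, hε, hball⟩ := Metric.isOpen_iff.1 (hop s) y (hminW y)
    obtain ⟨m, hm⟩ : ∃ m : ℕ, (1/2:ℝ)^m < ε / 2 := exists_pow_lt_of_lt_one (by linarith) (by norm_num)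
    have hcent : y ∈ Cent m s := by
      refine ⟨rfl, ?_⟩
      apply Set.Subset.trans (Metric.ball_subset_ball ?_) hball
      simp only [hδ]
      linarith
    refine Set.mem_iUnion.2 ⟨m, Set.mem_iUnion.2 ⟨s, ?_⟩⟩
    exact Set.mem_iUnion₂.2 ⟨y, hcent, Metric.mem_ball_self (by linarith [hδpos m])⟩

/-- Arbitrary open covers of a metric space with `CovDimLE n` admit open refinements
of order at most `n+1`. -/
lemma covdim_refine_cover {Y : Type*} [MetricSpace Y] {n : ℤ} (h : CovDimLE Y n)
    {ι : Type*} (W : ι → Set Y) (hop : ∀ s, IsOpen (W s)) (hcov : (⋃ s, W s) = Set.univ) :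
    ∃ R : ℕ × ι → Set Y, (∀ p, IsOpen (R p)) ∧ (∀ p, R p ⊆ W p.2) ∧
      (⋃ p, R p) = Set.univ ∧
      ∀ y, {p | y ∈ R p}.Finite ∧ {p | y ∈ R p}.ncard ≤ (n + 1).toNat := by
  classical
  obtain ⟨D, hDop, hDW, hDdisj, hDcov⟩ := sigma_disjoint_refinement W hop hcov
  set E : ℕ → Set Y := fun m => ⋃ s, D m s with hE
  have hEop : ∀ m, IsOpen (E m) := fun m => isOpen_iUnion (fun s => hDop m s)
  have hEcov : (⋃ m, E m) = Set.univ := hDcov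
  obtain ⟨A, hAop, hAE, hAcov, hAord⟩ := covdim_countable h E hEop hEcov
  refine ⟨fun p => A p.1 ∩ D p.1 p.2, fun p => (hAop p.1).inter (hDop p.1 p.2),
    fun p => fun y hy => hDW p.1 p.2 hy.2, ?_, ?_⟩
  · apply Set.eq_univ_of_forall
    intro y
    have : y ∈ ⋃ m, A m := hAcov ▸ Set.mem_univ y
    obtain ⟨m, hm⟩ := Set.mem_iUnion.1 this
    have : y ∈ E m := hAE m hm
    obtain ⟨s, hs⟩ := Set.mem_iUnion.1 this
    exact Set.mem_iUnion.2 ⟨(m, s), hm, hs⟩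
  · intro y
    have hmaps : ∀ p ∈ {p : ℕ × ι | y ∈ A p.1 ∩ D p.1 p.2}, p.1 ∈ {m | y ∈ A m} :=
      fun p hp => hp.1
    have hinj : Set.InjOn (fun p : ℕ × ι => p.1) {p | y ∈ A p.1 ∩ D p.1 p.2} := by
      rintro ⟨m1, s1⟩ h1 ⟨m2, s2⟩ h2 heq
      simp only at heq
      subst heq
      have : s1 = s2 := by
        by_contra hc
        have := hDdisj m1 s1 s2 hc
        have hy : y ∈ D m1 s1 ∩ D m1 s2 := ⟨h1.2, h2.2⟩
        rw [this] at hy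
        exact hy
      rw [this]
    have hfin2 : {p : ℕ × ι | y ∈ A p.1 ∩ D p.1 p.2}.Finite := by
      apply Set.Finite.of_finite_image _ hinj
      exact (hAord y).1.subset (by rintro m ⟨p, hp, rfl⟩; exact hp.1)
    exact ⟨hfin2, le_trans (Set.ncard_le_ncard_of_injOn _ hmaps hinj (hAord y).1) (hAord y).2⟩

/-- Decomposing a zero-dimensional subset along a finite open cover of the ambient space. -/
lemma fiber_decomp {X : Type*} [TopologicalSpace X] (F : Set X) (h : CovDimLE F 0)
    {ι : Type*} [Finite ι] [Nonempty ι] (u : ι → Set X) (hop : ∀ i, IsOpen (u i))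
    (hcov : F ⊆ ⋃ i, u i) :
    ∃ S : ι → Set X, (∀ i, S i ⊆ u i) ∧ (∀ i, S i ⊆ F) ∧ (⋃ i, S i) = F ∧
      (∀ i j, i ≠ j → S i ∩ S j = ∅) ∧ (∀ i, ∃ O : Set X, IsOpen O ∧ S i = F ∩ O) := by
  classical
  have hcov' : (⋃ i, (Subtype.val ⁻¹' u i : Set F)) = Set.univ := by
    apply Set.eq_univ_of_forall
    rintro ⟨x, hx⟩
    obtain ⟨i, hi⟩ := Set.mem_iUnion.1 (hcov hx)
    exact Set.mem_iUnion.2 ⟨i, hi⟩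
  obtain ⟨c, hcop, hcu, hccov, hcord⟩ := covdim_indexed h
    (fun i => (Subtype.val ⁻¹' u i : Set F)) (fun i => (hop i).preimage continuous_subtype_val)
    hcov'
  have hcdisj : ∀ i j, i ≠ j → c i ∩ c j = ∅ := by
    intro i j hij
    ext z
    simp only [Set.mem_inter_iff, Set.mem_empty_iff_false, iff_false]
    rintro ⟨hzi, hzj⟩
    have hsub : ({i, j} : Set ι) ⊆ {i' | z ∈ c i'} := by
      rintro i' (rfl | rfl) <;> assumption
    have h2 : ({i, j} : Set ι).ncard = 2 := Set.ncard_pair hij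
    have := Set.ncard_le_ncard hsub (Set.toFinite _)
    rw [h2] at this
    have hord : {i' | z ∈ c i'}.ncard ≤ 1 := hcord z
    omega
  refine ⟨fun i => Subtype.val '' c i, ?_, ?_, ?_, ?_, ?_⟩
  · rintro i x ⟨z, hz, rfl⟩
    exact hcu i hz
  · rintro i x ⟨z, hz, rfl⟩
    exact z.2
  · apply Set.Subset.antisymm
    · rintro x ⟨_, ⟨i, rfl⟩, z, hz, rfl⟩
      exact z.2
    · intro x hx
      have : (⟨x, hx⟩ : F) ∈ ⋃ i, c i := hccov ▸ Set.mem_univ _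
      obtain ⟨i, hi⟩ := Set.mem_iUnion.1 this
      exact Set.mem_iUnion.2 ⟨i, ⟨x, hx⟩, hi, rfl⟩
  · intro i j hij
    ext x
    simp only [Set.mem_inter_iff, Set.mem_empty_iff_false, iff_false]
    rintro ⟨⟨z, hz, rfl⟩, ⟨z', hz', hzz⟩⟩
    have : z' = z := Subtype.ext hzz
    subst this
    have := hcdisj i j hij
    have hmem : z' ∈ c i ∩ c j := ⟨hz, hz'⟩
    rw [this] at hmem
    exact hmem
  · intro i
    obtain ⟨O, hOop, hOc⟩ := isOpen_induced_iff.1 (hcop i)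
    refine ⟨O, hOop, ?_⟩
    show Subtype.val '' c i = F ∩ O
    rw [← hOc, Set.image_preimage_eq_inter_range, Subtype.range_coe]
    exact Set.inter_comm _ _

/-- Disjoint relatively open subsets can be expanded to disjoint open sets in a metric space. -/
lemma disjoint_expansion {X : Type*} [MetricSpace X] {ι : Type*} (F : Set X) (S : ι → Set X)
    (hSF : ∀ i, S i ⊆ F) (hdisj : ∀ i j, i ≠ j → S i ∩ S j = ∅)
    (hrel : ∀ i, ∃ O, IsOpen O ∧ S i = F ∩ O)
    (u : ι → Set X) (hop : ∀ i, IsOpen (u i)) (hSu : ∀ i, S i ⊆ u i) :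
    ∃ G : ι → Set X, (∀ i, IsOpen (G i)) ∧ (∀ i, S i ⊆ G i) ∧ (∀ i, G i ⊆ u i) ∧
      ∀ i j, i ≠ j → G i ∩ G j = ∅ := by
  classical
  set T : ι → Set X := fun i => ⋃ j, ⋃ (_ : j ≠ i), S j with hT
  set G : ι → Set X := fun i =>
    u i ∩ {x | infEdist x (S i) < infEdist x (T i)} with hG
  have hGop : ∀ i, IsOpen (G i) :=
    fun i => (hop i).inter (isOpen_lt continuous_infEdist continuous_infEdist)
  refine ⟨G, hGop, ?_, fun i => Set.inter_subset_left, ?_⟩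
  · intro i x hx
    refine ⟨hSu i hx, ?_⟩
    have h0 : infEdist x (S i) = 0 := infEdist_zero_of_mem hx
    obtain ⟨O, hOop, hSO⟩ := hrel i
    have hxO : x ∈ O := (hSO ▸ hx).2
    obtain ⟨ε, hε, hball⟩ := EMetric.isOpen_iff.1 hOop x hxO
    have hle : ε ≤ infEdist x (T i) := by
      apply le_infEdist.2
      intro z hz
      have hz' : ∃ j, j ≠ i ∧ z ∈ S j := by
        obtain ⟨_, ⟨j, rfl⟩, hm⟩ := hz
        obtain ⟨hji, hzj⟩ := Set.mem_iUnion.1 hm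
        exact ⟨j, hji, hzj⟩
      obtain ⟨j, hji, hzj⟩ := hz'
      by_contra hc
      push_neg at hc
      have hzO : z ∈ O := hball (EMetric.mem_ball.2 (by rw [edist_comm]; exact hc))
      have hzS : z ∈ S i := hSO ▸ ⟨hSF j hzj, hzO⟩
      have := hdisj j i hji
      have hmem : z ∈ S j ∩ S i := ⟨hzj, hzS⟩
      rw [this] at hmem
      exact hmem
    show infEdist x (S i) < infEdist x (T i)
    rw [h0]
    exact lt_of_lt_of_le hε hle
  · intro i j hij
    ext x
    simp only [Set.mem_inter_iff, Set.mem_empty_iff_false, iff_false]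
    rintro ⟨⟨_, hxi⟩, ⟨_, hxj⟩⟩
    have h1 : infEdist x (T i) ≤ infEdist x (S j) :=
      infEdist_anti (fun z hz => Set.mem_iUnion.2 ⟨j, Set.mem_iUnion.2 ⟨Ne.symm hij, hz⟩⟩)
    have h2 : infEdist x (T j) ≤ infEdist x (S i) :=
      infEdist_anti (fun z hz => Set.mem_iUnion.2 ⟨i, Set.mem_iUnion.2 ⟨hij, hz⟩⟩)
    have hxi' : infEdist x (S i) < infEdist x (T i) := hxi
    have hxj' : infEdist x (S j) < infEdist x (T j) := hxj
    have : infEdist x (S i) < infEdist x (S i) :=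
      lt_of_lt_of_le (lt_of_le_of_lt (le_of_lt (lt_of_lt_of_le hxi' h1)) hxj') h2
    exact lt_irrefl _ this

/-- Hurewicz's theorem on closed dimension-lowering maps (`0`-dimensional case): if
`f : X → Y` is a closed continuous surjection of metrizable spaces all of whose fibers
have covering dimension `≤ 0`, then `dim X ≤ dim Y`. -/
theorem stmt15 {X Y : Type*} [TopologicalSpace X] [TopologicalSpace.MetrizableSpace X]
    [TopologicalSpace Y] [TopologicalSpace.MetrizableSpace Y]
    (f : X → Y) (hf : Continuous f) (hclosed : IsClosedMap f)
    (hsurj : Function.Surjective f)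
    (hfib : ∀ y : Y, CovDimLE (f ⁻¹' {y}) 0) :
    ∀ n : ℤ, CovDimLE Y n → CovDimLE X n := by
  classical
  intro n hY Ucov hUfin hUop hUcov
  by_cases hXe : IsEmpty X
  · refine ⟨∅, Set.finite_empty, by simp, ?_, by simp, by simp⟩
    rw [Set.sUnion_empty]
    exact Set.eq_univ_of_forall (fun x => (hXe.false x).elim)
  rw [not_isEmpty_iff] at hXe
  haveI : Nonempty Y := Nonempty.map f hXe
  letI mX : MetricSpace X := TopologicalSpace.metrizableSpaceMetric X
  letI mY : MetricSpace Y := TopologicalSpace.metrizableSpaceMetric Y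
  haveI : Nonempty ↥Ucov := by
    obtain ⟨x⟩ := hXe
    have : x ∈ ⋃₀ Ucov := hUcov ▸ Set.mem_univ x
    obtain ⟨u, hu, _⟩ := this
    exact ⟨⟨u, hu⟩⟩
  haveI : Finite ↥Ucov := hUfin
  set u : ↥Ucov → Set X := fun i => (i : Set X) with hu
  have hop : ∀ i, IsOpen (u i) := fun i => hUop i i.2
  have hucov : (⋃ i, u i) = Set.univ := by
    rw [← hUcov, Set.sUnion_eq_iUnion]
  -- fiberwise decompositions and expansions
  have hfibstep : ∀ y : Y, ∃ G : ↥Ucov → Set X, (∀ i, IsOpen (G i)) ∧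
      (∀ i, G i ⊆ u i) ∧ (∀ i j, i ≠ j → G i ∩ G j = ∅) ∧ f ⁻¹' {y} ⊆ ⋃ i, G i := by
    intro y
    obtain ⟨S, hSu, hSF, hScov, hSdisj, hSrel⟩ :=
      fiber_decomp (f ⁻¹' {y}) (hfib y) u hop (by rw [hucov]; exact Set.subset_univ _)
    obtain ⟨G, hGop, hGS, hGu, hGdisj⟩ :=
      disjoint_expansion (f ⁻¹' {y}) S hSF hSdisj hSrel u hop hSu
    refine ⟨G, hGop, hGu, hGdisj, ?_⟩
    intro x hx
    have : x ∈ ⋃ i, S i := hScov ▸ hx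
    obtain ⟨i, hi⟩ := Set.mem_iUnion.1 this
    exact Set.mem_iUnion.2 ⟨i, hGS i hi⟩
  choose G hGop hGu hGdisj hGcov using hfibstep
  -- tube sets
  set W : Y → Set Y := fun y => (f '' (⋃ i, G y i)ᶜ)ᶜ with hW
  have hWop : ∀ y, IsOpen (W y) :=
    fun y => (hclosed _ (isOpen_iUnion (hGop y)).isClosed_compl).isOpen_compl
  have hWmem : ∀ y, y ∈ W y := by
    intro y
    rintro ⟨x, hx, hfx⟩
    exact hx (hGcov y (by rw [Set.mem_preimage, hfx]; rfl))
  have hWpre : ∀ y, f ⁻¹' (W y) ⊆ ⋃ i, G y i := by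
    intro y x hx
    by_contra hc
    exact hx ⟨x, hc, rfl⟩
  have hWcov : (⋃ y, W y) = Set.univ :=
    Set.eq_univ_of_forall (fun y => Set.mem_iUnion.2 ⟨y, hWmem y⟩)
  obtain ⟨R, hRop, hRW, hRcov, hRord⟩ := covdim_refine_cover hY W hWop hWcov
  -- final refinement
  set B : ↥Ucov → Set X := fun i => ⋃ p : ℕ × Y, f ⁻¹' (R p) ∩ G p.2 i with hB
  refine ⟨Set.range B, Set.finite_range B, ?_, ?_, ?_, ?_⟩
  · rintro _ ⟨i, rfl⟩
    exact isOpen_iUnion (fun p => ((hRop p).preimage hf).inter (hGop p.2 i))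
  · apply Set.eq_univ_of_forall
    intro x
    have : f x ∈ ⋃ p, R p := hRcov ▸ Set.mem_univ _
    obtain ⟨p, hp⟩ := Set.mem_iUnion.1 this
    have hx2 : x ∈ ⋃ i, G p.2 i := hWpre p.2 (hRW p hp)
    obtain ⟨i, hi⟩ := Set.mem_iUnion.1 hx2
    exact ⟨B i, ⟨i, rfl⟩, Set.mem_iUnion.2 ⟨p, hp, hi⟩⟩
  · rintro _ ⟨i, rfl⟩
    refine ⟨u i, i.2, ?_⟩
    rintro x hx
    obtain ⟨p, _, hxg⟩ := Set.mem_iUnion.1 hx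
    exact hGu p.2 i hxg
  · intro x
    have step1 : {v ∈ Set.range B | x ∈ v} ⊆ B '' {i | x ∈ B i} := by
      rintro v ⟨⟨i, rfl⟩, hxv⟩
      exact ⟨i, hxv, rfl⟩
    have step2 : {i | x ∈ B i}.ncard ≤ {p : ℕ × Y | f x ∈ R p}.ncard := by
      have hmem : ∀ i ∈ {i | x ∈ B i}, ∃ p : ℕ × Y, f x ∈ R p ∧ x ∈ G p.2 i := by
        intro i hi
        obtain ⟨p, hp, hg⟩ := Set.mem_iUnion.1 hi
        exact ⟨p, hp, hg⟩
      choose! pp hpp using hmem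
      apply Set.ncard_le_ncard_of_injOn pp (fun i hi => (hpp i hi).1) ?_ (hRord (f x)).1
      intro i1 h1 i2 h2 heq
      by_contra hc
      have hd := hGdisj (pp i1).2 i1 i2 hc
      have hm : x ∈ G (pp i1).2 i1 ∩ G (pp i1).2 i2 := by
        refine ⟨(hpp i1 h1).2, ?_⟩
        have h3 := (hpp i2 h2).2
        rwa [← heq] at h3
      rw [hd] at hm
      exact hm
    calc {v ∈ Set.range B | x ∈ v}.ncard
        ≤ (B '' {i | x ∈ B i}).ncard := Set.ncard_le_ncard step1 ((Set.toFinite _).image B)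
      _ ≤ {i | x ∈ B i}.ncard := Set.ncard_image_le (Set.toFinite _)
      _ ≤ {p : ℕ × Y | f x ∈ R p}.ncard := step2
      _ ≤ (n+1).toNat := (hRord (f x)).2
end
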